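/- Let σ be a consistent two-dimensional domino-complete substitution on a finite alphabet A. Then there exist vectors α, β ∈ ℤ² and, for every t ∈ A, a vector v_t ∈ ℤ², such that every C_σ-path γ from a cell [(0,0),t] to a cell [(x,y),t'] satisfies ω_σ(γ) = xα + yβ − v_t + v_{t'}. -/

import Mathlib

open scoped Classical

/-- A combinatorial substitution on alphabet `A` with vectors in `V`:
a base rule sending each letter to a pattern, together with a deterministic
finite set of concatenation rules.  `rule t t' u = some v` encodes the
concatenation rule `(t, t', u) ↦ v`. -/
structure Subst (A : Type*) (V : Type*) [AddCommGroup V] where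
  /-- the base rule -/
  base : A → Finset (V × A)
  /-- the image of a letter is a pattern: its cells have distinct vectors -/
  basePat : ∀ t : A, ∀ c ∈ base t, ∀ c' ∈ base t, c.1 = c'.1 → c = c'
  /-- the concatenation rules, as a partial function -/
  rule : A → A → V → Option V
  /-- there are finitely many concatenation rules -/
  finiteRules : {u : V | ∃ t t', rule t t' u ≠ none}.Finite
  /-- determinism: no two rules with left-hand sides `(t,t',u)` and `(t,t',-u)` -/
  det : ∀ t t' u, (rule t t' u).isSome → (rule t t' (-u)).isSome → u = -u

/-- A pattern is a finite set of cells with pairwise distinct vectors. -/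
def IsPattern {V A : Type*} (P : Finset (V × A)) : Prop :=
  ∀ c ∈ P, ∀ c' ∈ P, c.1 = c'.1 → c = c'

namespace Subst

variable {A V : Type*} [AddCommGroup V]

/-- `σ_rule(c, c')`: the relative position of the images of the two cells
`c`, `c'`, when some concatenation rule applies to them. -/
def ruleVec (σ : Subst A V) (c c' : V × A) : Option V :=
  match σ.rule c.2 c'.2 (c'.1 - c.1) with
  | some v => some v
  | none => (σ.rule c'.2 c.2 (c.1 - c'.1)).map (fun v => -v)

/-- The image vector `ω_σ(γ)` of a path `γ`. -/
def omega (σ : Subst A V) (γ : List (V × A)) : V :=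
  ((γ.zip γ.tail).map (fun p => (σ.ruleVec p.1 p.2).getD 0)).sum

/-- A `C_σ`-path: a nonempty sequence of cells in which any two consecutive
cells form a translated copy of a starting pattern of `σ`, and any two cells
with the same vector are equal. -/
def IsPath (σ : Subst A V) (γ : List (V × A)) : Prop :=
  γ ≠ [] ∧ γ.Chain' (fun c c' => (σ.ruleVec c c').isSome) ∧
    ∀ c ∈ γ, ∀ c' ∈ γ, c.1 = c'.1 → c = c'

/-- A `C_σ`-path of the pattern `P`. -/
def IsPathOf (σ : Subst A V) (P : Finset (V × A)) (γ : List (V × A)) : Prop :=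
  σ.IsPath γ ∧ ∀ c ∈ γ, c ∈ P

/-- A `C_σ`-loop of the pattern `P`. -/
def IsLoopOf (σ : Subst A V) (P : Finset (V × A)) (γ : List (V × A)) : Prop :=
  σ.IsPathOf P γ ∧ γ.head? = γ.getLast?

/-- `P` is `C_σ`-covered: any two of its cells are joined by a `C_σ`-path of `P`. -/
def Covered (σ : Subst A V) (P : Finset (V × A)) : Prop :=
  ∀ c ∈ P, ∀ c' ∈ P,
    ∃ γ, σ.IsPathOf P γ ∧ γ.head? = some c ∧ γ.getLast? = some c'

/-- `σ` is consistent on `P`: any two `C_σ`-paths of `P` with the same first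
and last cells have the same image vector. -/
def ConsistentOn (σ : Subst A V) (P : Finset (V × A)) : Prop :=
  ∀ γ γ' : List (V × A), σ.IsPathOf P γ → σ.IsPathOf P γ' →
    γ.head? = γ'.head? → γ.getLast? = γ'.getLast? → σ.omega γ = σ.omega γ'

/-- `σ` is consistent: it is consistent on every `C_σ`-covered pattern. -/
def Consistent (σ : Subst A V) : Prop :=
  ∀ P : Finset (V × A), IsPattern P → σ.Covered P → σ.ConsistentOn P

/-- The support of the image of a letter. -/
noncomputable def supp (σ : Subst A V) (t : A) : Finset V :=
  (σ.base t).image Prod.fst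

/-- `σ` is non-overlapping on `P`: the images of two distinct cells of `P`
joined by a `C_σ`-path of `P` have disjoint supports. -/
def NonOverlappingOn (σ : Subst A V) (P : Finset (V × A)) : Prop :=
  ∀ c ∈ P, ∀ c' ∈ P, c ≠ c' → ∀ γ, σ.IsPathOf P γ →
    γ.head? = some c → γ.getLast? = some c' →
    ∀ b ∈ σ.supp c'.2, σ.omega γ + b ∉ σ.supp c.2

/-- `σ` is non-overlapping: it is non-overlapping on every `C_σ`-covered pattern. -/
def NonOverlapping (σ : Subst A V) : Prop :=
  ∀ P : Finset (V × A), IsPattern P → σ.Covered P → σ.NonOverlappingOn P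

end Subst

/-- A domino: a two-cell two-dimensional pattern whose vectors differ by
`(1,0)`, `(-1,0)`, `(0,1)` or `(0,-1)`. -/
def IsDomino {A : Type*} (P : Finset ((ℤ × ℤ) × A)) : Prop :=
  ∃ (v u : ℤ × ℤ) (t t' : A), (u = (1, 0) ∨ u = (0, 1)) ∧
    P = {(v, t), (v + u, t')}

/-- A `2 × 2` pattern: a pattern whose support is a translate of
`{0,1} × {0,1}`. -/
def IsTwoByTwo {A : Type*} (P : Finset ((ℤ × ℤ) × A)) : Prop :=
  IsPattern P ∧ ∃ w : ℤ × ℤ,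
    P.image Prod.fst = ({w, w + (1, 0), w + (0, 1), w + (1, 1)} : Finset (ℤ × ℤ))

/-- A two-dimensional substitution is domino-complete when its starting
patterns are exactly all the dominoes. -/
def Subst.DominoComplete {A : Type*} (σ : Subst A (ℤ × ℤ)) : Prop :=
  (∀ (t t' : A) (u : ℤ × ℤ), σ.rule t t' u ≠ none →
      u = (1, 0) ∨ u = (-1, 0) ∨ u = (0, 1) ∨ u = (0, -1)) ∧
  ∀ t t' : A,
    (σ.ruleVec ((0, 0), t) ((1, 0), t')).isSome ∧
    (σ.ruleVec ((0, 0), t) ((0, 1), t')).isSome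

/-!
Write `h(a,b)` and `w(a,b)` for the rule vectors of the dominoes `[0,a] [(1,0),b]` and
`[0,a] [(0,1),b]`. Consistency on the loop `c, c', c` makes rule vectors antisymmetric, and
consistency on the loop around a unit square gives `h(a,b) + w(b,d) = w(a,c) + h(c,d)`. Fixing a
letter `t₀` and putting `v a = -w(a,t₀)`, this yields `h(a,b) = α - v a + v b` and
`w(a,b) = β - v a + v b`, so `(x, y, t) ↦ x α + y β + v t` is a potential for all rule vectors and
the image vector of any path telescopes.
-/
theorem List.IsChain.exists_isChain_subset_of_mem {α : Type*} {R : α → α → Prop}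
    [Std.Symm R] {l : List α} (hl : l.IsChain R) {a b : α} (ha : a ∈ l) (hb : b ∈ l) :
    ∃ m : List α, m.IsChain R ∧ m ⊆ l ∧ m.head? = some a ∧ m.getLast? = some b := by
  set R' : α → α → Prop := fun x y => x ∈ l ∧ y ∈ l ∧ R x y
  have : Std.Symm R' := ⟨fun _ _ ⟨hx, hy, h⟩ => ⟨hy, hx, Std.Symm.symm _ _ h⟩⟩
  have hne : l ≠ [] := List.ne_nil_of_mem ha
  have reach : ∀ x ∈ l, Relation.ReflTransGen R' (l.head hne) x :=
    (List.IsChain.iff_mem.mp hl).induction _ _ (fun _ _ h hx => hx.tail h) fun _ => .refl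
  obtain ⟨m, hm, hchain, rfl, rfl⟩ := List.exists_isChain_ne_nil_of_relationReflTransGen
    ((Std.Symm.symm _ _ (reach a ha)).trans (reach b hb))
  exact ⟨m, hchain.imp fun _ _ h => h.2.2,
    hchain.induction (· ∈ l) m (fun _ _ h _ => h.2.1) fun _ => ha,
    List.head?_eq_some_head hm, List.getLast?_eq_some_getLast hm⟩

namespace Subst

variable {A V : Type*} [AddCommGroup V] {σ : Subst A V}

theorem isSome_ruleVec_comm {c c' : V × A} (h : (σ.ruleVec c c').isSome) :
    (σ.ruleVec c' c).isSome := by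
  rcases h1 : σ.rule c.2 c'.2 (c'.1 - c.1) <;> rcases h2 : σ.rule c'.2 c.2 (c.1 - c'.1) <;>
    simp_all [ruleVec]

theorem ruleVec_eq_ruleVec_zero (p q : V) (a b : A) :
    σ.ruleVec (p, a) (q, b) = σ.ruleVec (0, a) (q - p, b) := by
  simp [ruleVec]

@[simp]
theorem omega_singleton (c : V × A) : σ.omega [c] = 0 := by
  simp [omega]

@[simp]
theorem omega_cons_cons (c c' : V × A) (γ : List (V × A)) :
    σ.omega (c :: c' :: γ) = (σ.ruleVec c c').getD 0 + σ.omega (c' :: γ) := by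
  simp [omega]

theorem IsPath.mono {γ δ : List (V × A)} (hγ : σ.IsPath γ) (hδ : δ ≠ [])
    (hchain : δ.IsChain fun c c' => (σ.ruleVec c c').isSome) (hsub : δ ⊆ γ) : σ.IsPath δ :=
  ⟨hδ, hchain, fun c hc c' hc' => hγ.2.2 c (hsub hc) c' (hsub hc')⟩

theorem IsPath.isPattern_toFinset {γ : List (V × A)} (hγ : σ.IsPath γ) :
    IsPattern γ.toFinset := by
  simpa [IsPattern] using hγ.2.2

theorem IsPath.covered_toFinset {γ : List (V × A)} (hγ : σ.IsPath γ) :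
    σ.Covered γ.toFinset := by
  intro c hc c' hc'
  rw [List.mem_toFinset] at hc hc'
  obtain ⟨δ, hchain, hsub, hhead, hlast⟩ :=
    haveI : Std.Symm fun c c' : V × A => (σ.ruleVec c c').isSome :=
      ⟨fun _ _ => isSome_ruleVec_comm⟩
    hγ.2.1.exists_isChain_subset_of_mem hc hc'
  refine ⟨δ, ⟨hγ.mono (by rintro rfl; simp at hhead) hchain hsub, ?_⟩, hhead, hlast⟩
  exact fun x hx => List.mem_toFinset.mpr (hsub hx)

theorem Consistent.omega_eq_of_subset (hcons : σ.Consistent) {γ δ δ' : List (V × A)}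
    (hγ : σ.IsPath γ) (hδ : σ.IsPath δ) (hδ' : σ.IsPath δ') (hsub : δ ⊆ γ) (hsub' : δ' ⊆ γ)
    (hhead : δ.head? = δ'.head?) (hlast : δ.getLast? = δ'.getLast?) :
    σ.omega δ = σ.omega δ' :=
  hcons _ hγ.isPattern_toFinset hγ.covered_toFinset δ δ'
    ⟨hδ, fun _ hx => List.mem_toFinset.mpr (hsub hx)⟩
    ⟨hδ', fun _ hx => List.mem_toFinset.mpr (hsub' hx)⟩ hhead hlast

theorem Consistent.ruleVec_swap (hcons : σ.Consistent) {c c' : V × A} (hne : c.1 ≠ c'.1)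
    (hs : (σ.ruleVec c c').isSome) :
    (σ.ruleVec c c').getD 0 = -(σ.ruleVec c' c).getD 0 := by
  have hloop : σ.IsPath [c, c', c] := by
    refine ⟨by simp, ?_, ?_⟩
    · exact List.isChain_cons_cons.mpr ⟨hs, List.isChain_pair.mpr (isSome_ruleVec_comm hs)⟩
    · simp only [List.mem_cons, List.not_mem_nil, or_false]
      grind
  have hsingle : σ.IsPath [c] := hloop.mono (by simp) (by simp) (by simp)
  have := hcons.omega_eq_of_subset hloop hloop hsingle (List.Subset.refl _)
    (by simp) rfl rfl
  simpa [eq_neg_iff_add_eq_zero] using this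

theorem omega_eq_sub_of_forall_ruleVec (F : V × A → V)
    (hF : ∀ c c', (σ.ruleVec c c').isSome → (σ.ruleVec c c').getD 0 = F c' - F c)
    {γ : List (V × A)} (hγ : γ.IsChain fun c c' => (σ.ruleVec c c').isSome) {c c' : V × A}
    (hhead : γ.head? = some c) (hlast : γ.getLast? = some c') :
    σ.omega γ = F c' - F c := by
  induction γ generalizing c with
  | nil => simp at hhead
  | cons d γ ih =>
    cases γ with
    | nil => simp_all
    | cons e γ =>
      obtain ⟨hde, hγ⟩ := List.isChain_cons_cons.mp hγ
      obtain rfl : d = c := by simpa using hhead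
      rw [omega_cons_cons, hF _ _ hde, ih hγ rfl (by simpa using hlast)]
      abel

end Subst

def latticePotential {A : Type*} (α β : ℤ × ℤ) (v : A → ℤ × ℤ) (c : (ℤ × ℤ) × A) : ℤ × ℤ :=
  c.1.1 • α + c.1.2 • β + v c.2

namespace Subst.DominoComplete

variable {A : Type*} {σ : Subst A (ℤ × ℤ)}

theorem sub_eq_of_isSome (hdc : σ.DominoComplete) {c c' : (ℤ × ℤ) × A}
    (h : (σ.ruleVec c c').isSome) :
    c'.1 - c.1 = (1, 0) ∨ c'.1 - c.1 = (-1, 0) ∨ c'.1 - c.1 = (0, 1) ∨ c'.1 - c.1 = (0, -1) := by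
  rcases h₁ : σ.rule c.2 c'.2 (c'.1 - c.1) with _ | v
  · have h₂ : σ.rule c'.2 c.2 (c.1 - c'.1) ≠ none := by
      intro h₂
      simp [ruleVec, h₁, h₂] at h
    rw [← neg_sub]
    rcases hdc.1 _ _ _ h₂ with h₃ | h₃ | h₃ | h₃ <;> simp [h₃]
  · exact hdc.1 c.2 c'.2 _ (by simp [h₁])

theorem ruleVec_square_comm (hdc : σ.DominoComplete) (hcons : σ.Consistent) (a b c d : A) :
    (σ.ruleVec (0, a) ((1, 0), b)).getD 0 + (σ.ruleVec (0, b) ((0, 1), d)).getD 0 =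
      (σ.ruleVec (0, a) ((0, 1), c)).getD 0 + (σ.ruleVec (0, c) ((1, 0), d)).getD 0 := by
  have e₁ : σ.ruleVec ((1, 0), b) ((1, 1), d) = σ.ruleVec (0, b) ((0, 1), d) := by
    rw [ruleVec_eq_ruleVec_zero]; rfl
  have e₂ : σ.ruleVec ((0, 1), c) ((1, 1), d) = σ.ruleVec (0, c) ((1, 0), d) := by
    rw [ruleVec_eq_ruleVec_zero]; rfl
  have h₁ : (σ.ruleVec (0, a) ((1, 0), b)).isSome := (hdc.2 a b).1
  have h₂ : (σ.ruleVec ((1, 0), b) ((1, 1), d)).isSome := e₁ ▸ (hdc.2 b d).2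
  have h₃ : (σ.ruleVec (0, a) ((0, 1), c)).isSome := (hdc.2 a c).2
  have h₄ : (σ.ruleVec ((0, 1), c) ((1, 1), d)).isSome := e₂ ▸ (hdc.2 c d).1
  have hloop : σ.IsPath [(0, a), ((1, 0), b), ((1, 1), d), ((0, 1), c), (0, a)] := by
    refine ⟨by simp, ?_, ?_⟩
    · show List.IsChain _ _
      simp only [List.isChain_cons_cons, List.isChain_singleton, and_true]
      exact ⟨h₁, h₂, isSome_ruleVec_comm h₄, isSome_ruleVec_comm h₃⟩
    · simp only [List.mem_cons, List.not_mem_nil, or_false]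
      rintro x (rfl | rfl | rfl | rfl | rfl) y (rfl | rfl | rfl | rfl | rfl) hxy <;>
        simp_all [Prod.ext_iff]
  have := hcons.omega_eq_of_subset (δ := [(0, a), ((1, 0), b), ((1, 1), d)])
    (δ' := [(0, a), ((0, 1), c), ((1, 1), d)]) hloop
    (hloop.mono (by simp) (by simpa using ⟨h₁, h₂⟩) (by simp))
    (hloop.mono (by simp) (by simpa using ⟨h₃, h₄⟩) (by simp)) (by simp) (by simp) rfl rfl
  simpa [e₁, e₂] using this

theorem exists_ruleVec_unit_eq (hdc : σ.DominoComplete) (hcons : σ.Consistent) :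
    ∃ (α β : ℤ × ℤ) (v : A → ℤ × ℤ), ∀ a b : A,
      (σ.ruleVec (0, a) ((1, 0), b)).getD 0 = α - v a + v b ∧
      (σ.ruleVec (0, a) ((0, 1), b)).getD 0 = β - v a + v b := by
  cases isEmpty_or_nonempty A with
  | inl _ => exact ⟨0, 0, 0, isEmptyElim⟩
  | inr h =>
    obtain ⟨t₀⟩ := h
    have square := hdc.ruleVec_square_comm hcons
    refine ⟨(σ.ruleVec (0, t₀) ((1, 0), t₀)).getD 0, (σ.ruleVec (0, t₀) ((0, 1), t₀)).getD 0,
      fun a => -(σ.ruleVec (0, a) ((0, 1), t₀)).getD 0, fun a b => ⟨?_, ?_⟩⟩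
    · linear_combination square a b t₀ t₀
    · linear_combination square t₀ a t₀ b - square t₀ a t₀ t₀ + square t₀ b t₀ t₀

theorem ruleVec_getD_eq_latticePotential_sub (hdc : σ.DominoComplete) (hcons : σ.Consistent)
    {α β : ℤ × ℤ} {v : A → ℤ × ℤ} (hαβ : ∀ a b : A,
      (σ.ruleVec (0, a) ((1, 0), b)).getD 0 = α - v a + v b ∧
      (σ.ruleVec (0, a) ((0, 1), b)).getD 0 = β - v a + v b)
    {c c' : (ℤ × ℤ) × A} (hs : (σ.ruleVec c c').isSome) :
    (σ.ruleVec c c').getD 0 = latticePotential α β v c' - latticePotential α β v c := by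
  have forward : ∀ c c' : (ℤ × ℤ) × A, c'.1 - c.1 = (1, 0) ∨ c'.1 - c.1 = (0, 1) →
      (σ.ruleVec c c').getD 0 = latticePotential α β v c' - latticePotential α β v c := by
    rintro ⟨p, a⟩ ⟨q, b⟩ (h | h) <;> obtain rfl := eq_add_of_sub_eq' h <;>
      rw [ruleVec_eq_ruleVec_zero, h]
    · rw [(hαβ a b).1]
      simp [latticePotential, add_smul]
      abel
    · rw [(hαβ a b).2]
      simp [latticePotential, add_smul]
      abel
  have backward : c.1 - c'.1 = (1, 0) ∨ c.1 - c'.1 = (0, 1) →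
      (σ.ruleVec c c').getD 0 = latticePotential α β v c' - latticePotential α β v c := by
    intro h
    have hne : c.1 ≠ c'.1 := fun he => by rcases h with h | h <;> simp [he, Prod.ext_iff] at h
    rw [hcons.ruleVec_swap hne hs, forward c' c h, neg_sub]
  rcases hdc.sub_eq_of_isSome hs with h | h | h | h
  · exact forward c c' (.inl h)
  · exact backward (.inl (by rw [← neg_sub, h]; rfl))
  · exact forward c c' (.inr h)
  · exact backward (.inr (by rw [← neg_sub, h]; rfl))

end Subst.DominoComplete

theorem structure_of_consistent_dominoComplete_general {A : Type*}
    (σ : Subst A (ℤ × ℤ)) (hdc : σ.DominoComplete) (hcons : σ.Consistent) :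
    ∃ (α β : ℤ × ℤ) (v : A → ℤ × ℤ),
      ∀ (t t' : A) (x y : ℤ) (γ : List ((ℤ × ℤ) × A)),
        σ.IsPath γ → γ.head? = some ((((0 : ℤ), (0 : ℤ)) : ℤ × ℤ), t) →
        γ.getLast? = some ((((x, y) : ℤ × ℤ)), t') →
        σ.omega γ = x • α + y • β - v t + v t' := by
  obtain ⟨α, β, v, hαβ⟩ := hdc.exists_ruleVec_unit_eq hcons
  refine ⟨α, β, v, fun t t' x y γ hγ hhead hlast => ?_⟩
  rw [σ.omega_eq_sub_of_forall_ruleVec (latticePotential α β v)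
    (fun _ _ => hdc.ruleVec_getD_eq_latticePotential_sub hcons hαβ) hγ.2.1 hhead hlast]
  simp [latticePotential]
  abel

/-- Proposition `structcdc`.  For a consistent
two-dimensional domino-complete substitution `σ` there are vectors
`α, β ∈ ℤ²` and a vector `v t ∈ ℤ²` for every letter `t`, such that every
`C_σ`-path from a cell `[(0,0), t]` to a cell `[(x,y), t']` has image vector
`x•α + y•β - v t + v t'`. -/
theorem structure_of_consistent_dominoComplete {A : Type*} [Fintype A]
    (σ : Subst A (ℤ × ℤ)) (hdc : σ.DominoComplete) (hcons : σ.Consistent) :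
    ∃ (α β : ℤ × ℤ) (v : A → ℤ × ℤ),
      ∀ (t t' : A) (x y : ℤ) (γ : List ((ℤ × ℤ) × A)),
        σ.IsPath γ → γ.head? = some ((((0 : ℤ), (0 : ℤ)) : ℤ × ℤ), t) →
        γ.getLast? = some ((((x, y) : ℤ × ℤ)), t') →
        σ.omega γ = x • α + y • β - v t + v t' :=
  structure_of_consistent_dominoComplete_general σ hdc hcons
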